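/- Let π₁, π₂ be pairings of [n] (n even). Then there exist permutations σ₁, σ₂ ∈ Sₙ such that σᵢ maps the standard pairing {{1,2},…,{n−1,n}} to πᵢ for i = 1,2, and sgn(σ₂σ₁⁻¹) = (−1)^{n/2 − #(π₁ ∨ π₂)}, where both σᵢ map the odd numbers onto a common set of representatives, one from each pair, chosen consistently for π₁ and π₂. -/

import Mathlib

/-- The number of blocks of the join of the orbit partitions of two permutations. -/
noncomputable def jointOrbitCount {I : Type*} (π₁ π₂ : Equiv.Perm I) : ℕ :=
  Nat.card (MulAction.orbitRel.Quotient
    (Subgroup.closure {π₁, π₂} : Subgroup (Equiv.Perm I)) I)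

/-- A pairing: a fixed-point-free involution. -/
def IsPairing {I : Type*} (π : Equiv.Perm I) : Prop :=
  π * π = 1 ∧ ∀ x, π x ≠ x

/-- σ maps the standard pairing {{0,1},{2,3},…} of Fin n to the pairing π:
the pairs of π are exactly the sets {σ(2k), σ(2k+1)}. -/
def MapsStd {n : ℕ} (σ π : Equiv.Perm (Fin n)) : Prop :=
  ∀ k : Fin n, k.1 % 2 = 0 → ∀ h1 : k.1 + 1 < n, π (σ k) = σ ⟨k.1 + 1, h1⟩

/-- The even positions of Fin n (corresponding to the odd numbers 1,3,…,n−1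
in the paper's 1-indexed convention). -/
def Evens (n : ℕ) : Set (Fin n) := {k | k.1 % 2 = 0}

/-
The rotation `c = π₂ π₁` is conjugated to its inverse by `π₁`, so `⟨π₁, π₂⟩` is dihedral and
its orbits are unions `O ∪ π₁ O` of `c`-orbits. Since `π₁` and `π₂` have no fixed points, `π₁ O`
is never `O` itself: an orbit of `c` containing `x` and `π₁ x` would produce a fixed point of
`π₁` or of `π₂` at its "midpoint". Choosing one orbit from each pair `{O, π₁ O}` gives a
`c`-invariant set `R` that meets every pair of `π₁` and of `π₂` exactly once. Listing `R` as
`r₀, r₁, …` and sending `2i ↦ rᵢ`, `2i + 1 ↦ πⱼ rᵢ` defines `σⱼ`; then `σ₂ σ₁⁻¹` is `c` on the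
complement of `R` and the identity on `R`. The complement has `n / 2` points and its `c`-orbits
correspond to the orbits of `⟨π₁, π₂⟩`, so the sign follows from
`sign g = (-1) ^ (#points - #orbits of g)`.
-/

open Equiv Equiv.Perm MulAction Subgroup

theorem Setoid.nat_card_quotient_comap {α β : Type*} {f : β → α} {r : Setoid α}
    (hf : ∀ x, ∃ y, r (f y) x) : Nat.card (Quotient (r.comap f)) = Nat.card (Quotient r) := by
  rw [Nat.card_congr (Setoid.comapQuotientEquiv f r), Set.range_eq_univ.mpr, Nat.card_univ]
  rintro ⟨x⟩
  obtain ⟨y, hy⟩ := hf x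
  exact ⟨y, Quotient.sound hy⟩

theorem Function.Involutive.exists_mem_iff_apply_notMem {β : Type*} {f : β → β}
    (hf : Function.Involutive f) (hfix : ∀ q, f q ≠ q) : ∃ T : Set β, ∀ q, q ∈ T ↔ f q ∉ T := by
  let _ := IsWellOrder.linearOrder (WellOrderingRel (α := β))
  refine ⟨{q | q < f q}, fun q => ?_⟩
  simp only [Set.mem_ofPred_eq, hf q, not_lt]
  exact ⟨le_of_lt, fun h => lt_of_le_of_ne h (hfix q).symm⟩

section Dihedral

variable {G : Type*} [Group G] {a b : G}

theorem conj_mul_of_mul_self_eq_one (ha : a * a = 1) (hb : b * b = 1) :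
    a * (b * a) * a⁻¹ = (b * a)⁻¹ := by
  rw [mul_inv_rev, inv_eq_of_mul_eq_one_right ha, inv_eq_of_mul_eq_one_right hb, mul_assoc,
    mul_assoc, ha, mul_one]

theorem mul_zpow_of_mul_self_eq_one (ha : a * a = 1) (hb : b * b = 1) (k : ℤ) :
    a * (b * a) ^ k = (b * a) ^ (-k) * a := by
  rw [zpow_neg, ← inv_zpow, ← conj_mul_of_mul_self_eq_one ha hb, conj_zpow, inv_mul_cancel_right]

theorem exists_zpow_of_mem_closure_pair (ha : a * a = 1) (hb : b * b = 1) {g : G}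
    (hg : g ∈ closure {a, b}) : ∃ k : ℤ, g = (b * a) ^ k ∨ g = (b * a) ^ k * a := by
  induction hg using closure_induction with
  | mem x hx =>
    rcases hx with rfl | rfl
    · exact ⟨0, .inr (by simp)⟩
    · exact ⟨1, .inr (by rw [zpow_one, mul_assoc, ha, mul_one])⟩
  | one => exact ⟨0, .inl (by simp)⟩
  | mul x y _ _ hx hy =>
    obtain ⟨k, rfl | rfl⟩ := hx <;> obtain ⟨l, rfl | rfl⟩ := hy
    · exact ⟨k + l, .inl (zpow_add _ _ _).symm⟩
    · exact ⟨k + l, .inr (by rw [zpow_add, mul_assoc])⟩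
    · exact ⟨k - l, .inr (by
        rw [mul_assoc, mul_zpow_of_mul_self_eq_one ha hb, ← mul_assoc, ← zpow_add, sub_eq_add_neg])⟩
    · exact ⟨k - l, .inl (by
        rw [mul_assoc, ← mul_assoc a, mul_zpow_of_mul_self_eq_one ha hb, mul_assoc, ha, mul_one,
          ← zpow_add, sub_eq_add_neg])⟩
  | inv x _ hx =>
    obtain ⟨k, rfl | rfl⟩ := hx
    · exact ⟨-k, .inl (zpow_neg _ _).symm⟩
    · exact ⟨k, .inr (by
        rw [mul_inv_rev, inv_eq_of_mul_eq_one_right ha, ← zpow_neg,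
          mul_zpow_of_mul_self_eq_one ha hb, neg_neg])⟩

end Dihedral

namespace Equiv.Perm

variable {α : Type*}

theorem orbitRel_zpowers (g : Perm α) : orbitRel (zpowers g) α = SameCycle.setoid g := by
  ext x y
  rw [orbitRel_apply, mem_orbit_iff]
  constructor
  · rintro ⟨⟨h, k, rfl⟩, rfl⟩
    exact ⟨-k, by simp [Subgroup.smul_def]⟩
  · rintro ⟨k, rfl⟩
    exact ⟨⟨g ^ (-k), -k, rfl⟩, by simp [Subgroup.smul_def]⟩

theorem zpow_apply_mem_iff {f : Perm α} {s : Set α} (h : ∀ x, f x ∈ s ↔ x ∈ s) (k : ℤ) (x : α) :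
    (f ^ k) x ∈ s ↔ x ∈ s := by
  induction k using Int.induction_on generalizing x with
  | zero => simp
  | succ k ih => rw [zpow_add_one, mul_apply, ih, h]
  | pred k ih => rw [zpow_sub_one, mul_apply, ih, ← h, ← mul_apply, mul_inv_cancel, one_apply]

variable {a b : Perm α}

theorem sameCycle_apply_apply_iff (ha : a * a = 1) (hb : b * b = 1) {x y : α} :
    SameCycle (b * a) (a x) (a y) ↔ SameCycle (b * a) x y := by
  rw [← sameCycle_inv, ← conj_mul_of_mul_self_eq_one ha hb, sameCycle_conj]
  simp

theorem orbitRel_closure_pair_iff (ha : a * a = 1) (hb : b * b = 1) (x y : α) :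
    orbitRel (closure {a, b}) α x y ↔ SameCycle (b * a) x y ∨ SameCycle (b * a) x (a y) := by
  have hc : b * a ∈ closure {a, b} := mul_mem (subset_closure (by simp)) (subset_closure (by simp))
  have hrel {g : Perm α} (hg : g ∈ closure {a, b}) (z : α) : orbitRel (closure {a, b}) α (g z) z :=
    mem_orbit z (⟨g, hg⟩ : closure {a, b})
  constructor
  · rw [orbitRel_apply, mem_orbit_iff]
    rintro ⟨⟨g, hg⟩, rfl⟩
    obtain ⟨k, rfl | rfl⟩ := exists_zpow_of_mem_closure_pair ha hb hg
    · exact .inl ⟨-k, by simp [Subgroup.smul_def]⟩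
    · exact .inr ⟨-k, by simp [Subgroup.smul_def]⟩
  · rintro (⟨k, rfl⟩ | ⟨k, hk⟩)
    · exact (orbitRel _ α).symm' (hrel (zpow_mem hc k) x)
    · exact (orbitRel _ α).trans' ((orbitRel _ α).symm' (hrel (zpow_mem hc k) x))
        (hk ▸ hrel (subset_closure (by simp)) y)

section Sign

variable [Fintype α] [DecidableEq α]

def cycleLabel (g : Perm α) (x : α) : {x // x ∉ g.support} ⊕ g.cycleFactorsFinset :=
  if h : x ∈ g.support then .inr ⟨g.cycleOf x, cycleOf_mem_cycleFactorsFinset_iff.mpr h⟩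
  else .inl ⟨x, h⟩

theorem cycleLabel_eq_iff (g : Perm α) (x y : α) :
    g.cycleLabel x = g.cycleLabel y ↔ g.SameCycle x y := by
  by_cases hx : x ∈ g.support <;> by_cases hy : y ∈ g.support <;>
    simp only [cycleLabel, hx, hy, dite_true, dite_false, reduceCtorEq, false_iff, Sum.inr.injEq,
      Sum.inl.injEq, Subtype.mk.injEq]
  · exact (sameCycle_iff_cycleOf_eq_of_mem_support hx hy).symm
  · exact fun h => hy (h.mem_support_iff.mp hx)
  · exact fun h => hx (h.mem_support_iff.mpr hy)
  · exact ⟨fun h => h ▸ SameCycle.refl _ _, fun h => h.eq_of_left (notMem_support.mp hx)⟩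

theorem cycleLabel_surjective (g : Perm α) : Function.Surjective g.cycleLabel := by
  rintro (⟨x, hx⟩ | ⟨σ, hσ⟩)
  · exact ⟨x, by simp [cycleLabel, hx]⟩
  · obtain ⟨x, hx⟩ := (mem_cycleFactorsFinset_iff.mp hσ).1.nonempty_support
    have hσx := cycle_is_cycleOf hx hσ
    have hxg : x ∈ g.support := cycleOf_mem_cycleFactorsFinset_iff.mp (hσx ▸ hσ)
    exact ⟨x, by simp [cycleLabel, hxg, hσx]⟩

theorem nat_card_quotient_sameCycle (g : Perm α) :
    Nat.card (Quotient (SameCycle.setoid g)) =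
      Fintype.card α - g.support.card + Multiset.card g.cycleType := by
  have hker : Setoid.ker g.cycleLabel = SameCycle.setoid g := Setoid.ext (cycleLabel_eq_iff g)
  rw [← hker, Nat.card_congr (Setoid.quotientKerEquivOfSurjective _ (cycleLabel_surjective g)),
    Nat.card_sum, Nat.card_eq_fintype_card, Fintype.card_subtype_compl, Fintype.card_coe,
    Nat.card_eq_fintype_card, Fintype.card_coe, cycleType_def, Multiset.card_map]
  rfl

theorem sign_eq_neg_one_pow_card_sub_card_orbits (g : Perm α) :
    sign g = (-1) ^ (Fintype.card α - Nat.card (orbitRel.Quotient (zpowers g) α)) := by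
  have hcard : Multiset.card g.cycleType ≤ g.support.card := by
    simpa [sum_cycleType] using Multiset.card_nsmul_le_sum (s := g.cycleType) (a := 1)
      fun k hk => (one_lt_of_mem_cycleType hk).le
  have hsupp : g.support.card ≤ Fintype.card α := Finset.card_le_univ _
  rw [orbitRel.Quotient, orbitRel_zpowers, nat_card_quotient_sameCycle, sign_of_cycleType,
    sum_cycleType]
  set s := g.support.card
  set t := Multiset.card g.cycleType
  rw [show s + t = Fintype.card α - (Fintype.card α - s + t) + 2 * t by omega, pow_add, pow_mul]
  simp

end Sign

end Equiv.Perm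

section Pairings

variable {α : Type*} {a b : Perm α}

theorem IsPairing.apply_apply (ha : IsPairing a) (x : α) : a (a x) = x := by
  simpa using congr($(ha.1) x)

theorem not_sameCycle_apply_self (ha : IsPairing a) (hb : IsPairing b) (x : α) :
    ¬ SameCycle (b * a) x (a x) := by
  have hswap (t : ℤ) (y : α) : a (((b * a) ^ t) y) = ((b * a) ^ (-t)) (a y) := by
    simpa only [mul_apply] using congr($(mul_zpow_of_mul_self_eq_one ha.1 hb.1 t) y)
  have hpow (s t : ℤ) (y : α) : ((b * a) ^ s) (((b * a) ^ t) y) = ((b * a) ^ (s + t)) y := by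
    rw [zpow_add, mul_apply]
  rintro ⟨k, hk⟩
  obtain ⟨t, rfl | rfl⟩ := Int.even_or_odd' k
  · apply ha.2 (((b * a) ^ t) x)
    rw [hswap, ← hk, hpow, show -t + 2 * t = t by ring]
  · apply hb.2 (((b * a) ^ (t + 1)) x)
    calc b (((b * a) ^ (t + 1)) x) = (b * a) (a (((b * a) ^ (t + 1)) x)) := by
          rw [mul_apply, ha.apply_apply]
      _ = ((b * a) ^ (1 + (-(t + 1) + (2 * t + 1)))) x := by
          rw [hswap, ← hk, hpow, zpow_one_add]
          rfl
      _ = ((b * a) ^ (t + 1)) x := by ring_nf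

structure IsCommonTransversal (a b : Perm α) (R : Set α) : Prop where
  mem_iff_left : ∀ x, x ∈ R ↔ a x ∉ R
  mem_iff_right : ∀ x, x ∈ R ↔ b x ∉ R

namespace IsCommonTransversal

variable {R : Set α}

theorem apply_mem_iff_left (hR : IsCommonTransversal a b R) {x : α} : a x ∈ R ↔ x ∉ R :=
  (not_congr (hR.mem_iff_left x)).trans not_not |>.symm

theorem mul_apply_mem_iff (hR : IsCommonTransversal a b R) (x : α) : (b * a) x ∈ R ↔ x ∈ R := by
  rw [mul_apply, hR.mem_iff_left x, hR.mem_iff_right (a x), not_not]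

theorem mul_apply_mem_compl_iff (hR : IsCommonTransversal a b R) (x : α) :
    (b * a) x ∈ Rᶜ ↔ x ∈ Rᶜ :=
  not_congr (hR.mul_apply_mem_iff x)

theorem nat_card_compl (hR : IsCommonTransversal a b R) : Nat.card ↥Rᶜ = Nat.card R :=
  Nat.card_congr (a.subtypeEquiv fun x => hR.mem_iff_left x).symm

theorem nat_card_add_nat_card [Finite α] (hR : IsCommonTransversal a b R) :
    Nat.card R + Nat.card R = Nat.card α := by
  rw [← Set.ncard_add_ncard_compl R, ← Nat.card_coe_set_eq, ← Nat.card_coe_set_eq,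
    hR.nat_card_compl]

theorem nat_card_orbitRel_closure_pair (ha : a * a = 1) (hb : b * b = 1)
    (hR : IsCommonTransversal a b R) :
    Nat.card (orbitRel.Quotient (zpowers ((b * a).subtypePerm hR.mul_apply_mem_compl_iff)) ↥Rᶜ) =
      Nat.card (orbitRel.Quotient (closure {a, b}) α) := by
  have hrel : orbitRel (zpowers ((b * a).subtypePerm hR.mul_apply_mem_compl_iff)) ↥Rᶜ =
      (orbitRel (closure {a, b}) α).comap Subtype.val := by
    rw [orbitRel_zpowers]
    ext x y
    rw [Setoid.comap_rel, orbitRel_closure_pair_iff ha hb, or_iff_left]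
    · exact sameCycle_subtypePerm
    · rintro ⟨k, hk⟩
      exact x.2 ((zpow_apply_mem_iff hR.mul_apply_mem_iff k x).mp
        (hk ▸ hR.apply_mem_iff_left.mpr y.2))
  rw [orbitRel.Quotient, orbitRel.Quotient, hrel]
  refine Setoid.nat_card_quotient_comap fun x => ?_
  by_cases hx : x ∈ R
  · exact ⟨⟨a x, (hR.mem_iff_left x).mp hx⟩,
      mem_orbit x (⟨a, subset_closure (by simp)⟩ : closure {a, b})⟩
  · exact ⟨⟨x, hx⟩, (orbitRel _ α).refl' x⟩

end IsCommonTransversal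

theorem exists_isCommonTransversal (ha : IsPairing a) (hb : IsPairing b) :
    ∃ R, IsCommonTransversal a b R := by
  let s := SameCycle.setoid (b * a)
  let ι : Quotient s → Quotient s :=
    Quotient.map a fun _ _ => (sameCycle_apply_apply_iff ha.1 hb.1).mpr
  have hι : Function.Involutive ι := by
    rintro ⟨x⟩
    exact congrArg (Quotient.mk s) (ha.apply_apply x)
  have hfix (q : Quotient s) : ι q ≠ q := by
    induction q using Quotient.inductionOn with | h x =>
    exact fun h => not_sameCycle_apply_self ha hb x (Quotient.exact h).symm
  obtain ⟨T, hT⟩ := hι.exists_mem_iff_apply_notMem hfix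
  have hmk_b (x : α) : Quotient.mk s (b x) = ι (Quotient.mk s x) := by
    have hbx : b x = (b * a) (a x) := by rw [mul_apply, ha.apply_apply]
    exact Quotient.sound (show SameCycle (b * a) (b x) (a x) by rw [hbx, sameCycle_apply_left])
  exact ⟨{x | Quotient.mk s x ∈ T}, fun x => hT _, fun x => (hT _).trans (by rw [← hmk_b]; rfl)⟩

end Pairings

namespace Fin

variable {m : ℕ} {R : Set (Fin (m + m))}

def interleave (e : Fin m ≃ R) (π : Perm (Fin (m + m))) (k : Fin (m + m)) : Fin (m + m) :=
  if k.1 % 2 = 0 then e ⟨k / 2, by omega⟩ else π (e ⟨k / 2, by omega⟩)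

theorem interleave_injective (e : Fin m ≃ R) {π : Perm (Fin (m + m))}
    (hπ : ∀ x, x ∈ R ↔ π x ∉ R) : Function.Injective (interleave e π) := by
  have hhalf {k l : Fin (m + m)} (h : (e ⟨k / 2, by omega⟩ : Fin (m + m)) = e ⟨l / 2, by omega⟩) :
      k.1 / 2 = l.1 / 2 := by
    simpa using e.injective (Subtype.ext h)
  intro k l hkl
  unfold interleave at hkl
  split_ifs at hkl with hk hl hl
  · exact Fin.ext (by have := hhalf hkl; omega)
  · exact absurd (hkl ▸ (e _).2) ((hπ _).mp (e _).2)
  · exact absurd (hkl ▸ (e _).2) ((hπ _).mp (e _).2)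
  · exact Fin.ext (by have := hhalf (π.injective hkl); omega)

noncomputable def interleavePerm (e : Fin m ≃ R) (π : Perm (Fin (m + m)))
    (hπ : ∀ x, x ∈ R ↔ π x ∉ R) : Perm (Fin (m + m)) :=
  Equiv.ofBijective _ (Finite.injective_iff_bijective.mp (interleave_injective e hπ))

theorem interleavePerm_apply (e : Fin m ≃ R) {π : Perm (Fin (m + m))}
    (hπ : ∀ x, x ∈ R ↔ π x ∉ R) (k : Fin (m + m)) : interleavePerm e π hπ k = interleave e π k :=
  rfl

theorem mapsStd_interleavePerm (e : Fin m ≃ R) {π : Perm (Fin (m + m))}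
    (hπ : ∀ x, x ∈ R ↔ π x ∉ R) : MapsStd (interleavePerm e π hπ) π := by
  intro k hk hk1
  simp only [interleavePerm_apply, interleave, hk, if_true, show (k.1 + 1) % 2 ≠ 0 by omega,
    if_false]
  congr 3
  simp only [Fin.mk.injEq]
  omega

theorem image_interleavePerm_evens (e : Fin m ≃ R) {π : Perm (Fin (m + m))}
    (hπ : ∀ x, x ∈ R ↔ π x ∉ R) : interleavePerm e π hπ '' Evens (m + m) = R := by
  ext x
  constructor
  · rintro ⟨k, hk, rfl⟩
    simp only [interleavePerm_apply, interleave, show k.1 % 2 = 0 from hk, if_true]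
    exact (e _).2
  · intro hx
    obtain ⟨i, hi⟩ := e.surjective ⟨x, hx⟩
    refine ⟨⟨2 * i, by omega⟩, by simp [Evens], ?_⟩
    simp [interleavePerm_apply, interleave, hi]

theorem interleavePerm_mul_inv [DecidablePred (· ∈ R)] (e : Fin m ≃ R) {π₁ π₂ : Perm (Fin (m + m))}
    (h₁ : π₁ * π₁ = 1) (hR : IsCommonTransversal π₁ π₂ R) :
    interleavePerm e π₂ hR.mem_iff_right * (interleavePerm e π₁ hR.mem_iff_left)⁻¹ =
      ofSubtype ((π₂ * π₁).subtypePerm hR.mul_apply_mem_compl_iff) := by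
  rw [mul_inv_eq_iff_eq_mul]
  refine Equiv.ext fun k => ?_
  simp only [mul_apply, interleavePerm_apply, interleave]
  split_ifs
  · rw [ofSubtype_apply_of_not_mem]
    exact not_not.mpr (e _).2
  · rw [ofSubtype_apply_of_mem (p := (· ∈ Rᶜ)) _ ((hR.mem_iff_left _).mp (e _).2)]
    show π₂ _ = π₂ (π₁ (π₁ _))
    rw [← mul_apply π₁, h₁, one_apply]

end Fin

theorem stmt12 (n : ℕ) (hn : Even n) (π₁ π₂ : Equiv.Perm (Fin n))
    (h₁ : IsPairing π₁) (h₂ : IsPairing π₂) :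
    ∃ (R : Set (Fin n)) (σ₁ σ₂ : Equiv.Perm (Fin n)),
      -- R contains exactly one element of each pair of π₁ and of π₂:
      (∀ x, x ∈ R ↔ π₁ x ∉ R) ∧ (∀ x, x ∈ R ↔ π₂ x ∉ R) ∧
      -- σᵢ maps the standard pairing to πᵢ:
      MapsStd σ₁ π₁ ∧ MapsStd σ₂ π₂ ∧
      -- both σᵢ map the odd numbers onto the common set R of representatives:
      (⇑σ₁) '' Evens n = R ∧ (⇑σ₂) '' Evens n = R ∧
      Equiv.Perm.sign (σ₂ * σ₁⁻¹) = (-1) ^ (n / 2 - jointOrbitCount π₁ π₂) := by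
  classical
  obtain ⟨m, rfl⟩ := hn
  obtain ⟨R, hR⟩ := exists_isCommonTransversal h₁ h₂
  have hcard : Nat.card R = m := by
    have := hR.nat_card_add_nat_card
    rw [Nat.card_fin] at this
    omega
  let e : Fin m ≃ R := (Finite.equivFinOfCardEq hcard).symm
  refine ⟨R, Fin.interleavePerm e π₁ hR.mem_iff_left, Fin.interleavePerm e π₂ hR.mem_iff_right,
    hR.mem_iff_left, hR.mem_iff_right, Fin.mapsStd_interleavePerm _ _,
    Fin.mapsStd_interleavePerm _ _, Fin.image_interleavePerm_evens _ _,
    Fin.image_interleavePerm_evens _ _, ?_⟩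
  rw [Fin.interleavePerm_mul_inv e h₁.1 hR, sign_ofSubtype,
    sign_eq_neg_one_pow_card_sub_card_orbits, hR.nat_card_orbitRel_closure_pair h₁.1 h₂.1,
    ← Nat.card_eq_fintype_card, hR.nat_card_compl, hcard, jointOrbitCount,
    show (m + m) / 2 = m by omega]
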